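/- arXiv:1601.02356 — 7 statements merged into one kernel-verified Lean document; each statement's English description precedes it below -/
import Mathlib

section
/- Let g be an n-Lie algebra over a field K with bracket [·,…,·] and let N : g → g be a linear map. Then N is a Nijenhuis operator on g if and only if for all x₁,…,xₙ ∈ g: Σ_{p=0}^{n} Σ_σ (−1)^{p(p−1)/2 + Σ_{j=1}^{p} σ(j)} N^p [x_{σ(1)},…,x_{σ(p)}, N x_{σ(p+1)},…, N x_{σ(n)}] = 0, where the inner summation is over all (p, n−p)-unshuffles σ of {1,…,n}, i.e. permutations with σ(1) < ⋯ < σ(p) and σ(p+1) < ⋯ < σ(n). -/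
open Finset

/-- `b` is an `m`-multilinear skew-symmetric (alternating) map. -/
def IsSkewMultilinear (K : Type*) [Field K] {g W : Type*} [AddCommGroup g] [Module K g]
    [AddCommGroup W] [Module K W] {m : ℕ} (b : (Fin m → g) → W) : Prop :=
  (∀ (x : Fin m → g) (i : Fin m) (u v : g),
      b (Function.update x i (u + v)) = b (Function.update x i u) + b (Function.update x i v)) ∧
  (∀ (x : Fin m → g) (i : Fin m) (c : K) (u : g),
      b (Function.update x i (c • u)) = c • b (Function.update x i u)) ∧
  (∀ (x : Fin m → g) (i j : Fin m), i ≠ j → x i = x j → b x = 0)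

/-- The Filippov (fundamental) identity for an `(n+1)`-ary bracket. -/
def IsFilippov {g : Type*} [AddCommGroup g] {n : ℕ} (b : (Fin (n + 1) → g) → g) : Prop :=
  ∀ (x : Fin n → g) (y : Fin (n + 1) → g),
    b (Fin.snoc x (b y)) = ∑ i : Fin (n + 1), b (Function.update y i (b (Fin.snoc x (y i))))

/-- `b` is an `(n+1)`-Lie algebra bracket. -/
def IsNLieBracket (K : Type*) [Field K] {g : Type*} [AddCommGroup g] [Module K g]
    {n : ℕ} (b : (Fin (n + 1) → g) → g) : Prop :=
  IsSkewMultilinear K b ∧ IsFilippov b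

/-- The brackets `[x₁,…,x_m]_N^j` defined inductively from an `m`-ary bracket `b`
and a linear map `N`: `[x]_N^0 = b x` and
`[x]_N^{j+1} = ∑_{|S| = j+1} b(N applied at positions in S) − N ([x]_N^j)`. -/
def nestedBracket {K : Type*} [Field K] {g : Type*} [AddCommGroup g] [Module K g]
    {m : ℕ} (b : (Fin m → g) → g) (N : Module.End K g) : ℕ → (Fin m → g) → g
  | 0 => b
  | j + 1 => fun x =>
      (∑ S ∈ Finset.powersetCard (j + 1) (Finset.univ : Finset (Fin m)),
          b (fun i => if i ∈ S then N (x i) else x i))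
        - N (nestedBracket b N j x)

/-- `N` is a Nijenhuis operator on the `(n+1)`-Lie algebra `(g, b)`:
`[Nx₁,…,Nx_{n+1}] = N([x₁,…,x_{n+1}]_N^n)`. -/
def IsNijenhuis {K : Type*} [Field K] {g : Type*} [AddCommGroup g] [Module K g]
    {n : ℕ} (b : (Fin (n + 1) → g) → g) (N : Module.End K g) : Prop :=
  ∀ x : Fin (n + 1) → g, b (fun i => N (x i)) = N (nestedBracket b N n x)

/-!
By skew-symmetry, an unshuffle term equals `± N^p [y]`, where `y` is `x` with `N` applied at the
positions `σ(p+1), …, σ(n)`. The inversions of an unshuffle are the pairs `j ≤ p < k` with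
`σ(k) < σ(j)`, and for fixed `j` there are `σ(j) - j` of them; so `sign σ` cancels the
prescribed sign up to `(-1)^p`. An unshuffle is determined by the set of positions where `N` is
applied, so the inner sum is `(-N)^p e_{n-p}`, where `e_k` sums `[y]` over all ways of applying
`N` to exactly `k` of the arguments. Unwinding the recursion gives
`[x]_N^j = ∑_{p ≤ j} (-N)^p e_{j-p}`, hence the identity reads `[x]_N^n = 0`, i.e.
`[Nx₁, …, Nxₙ] - N [x]_N^{n-1} = 0`.
-/

open Equiv

namespace IsSkewMultilinear

variable {K : Type*} [Field K] {g W : Type*} [AddCommGroup g] [Module K g] [AddCommGroup W]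
  [Module K W] {m : ℕ} {b : (Fin m → g) → W}

def toAlternatingMap (hb : IsSkewMultilinear K b) : g [⋀^Fin m]→ₗ[K] W where
  toFun := b
  map_update_add' x i u v := by convert hb.1 x i u v
  map_update_smul' x i c u := by convert hb.2.1 x i c u
  map_eq_zero_of_eq' x i j hx hij := hb.2.2 x i j hij hx

theorem map_perm (hb : IsSkewMultilinear K b) (x : Fin m → g) (σ : Perm (Fin m)) :
    b (x ∘ σ) = (Perm.sign σ : ℤ) • b x := by
  have := hb.toAlternatingMap.map_perm x σ
  rwa [Units.smul_def] at this

end IsSkewMultilinear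

section NestedBracket

variable {K : Type*} [Field K] {g : Type*} [AddCommGroup g] [Module K g] {m : ℕ}

def esymmBracket (b : (Fin m → g) → g) (N : Module.End K g) (k : ℕ) (x : Fin m → g) : g :=
  ∑ S ∈ powersetCard k univ, b (fun i => if i ∈ S then N (x i) else x i)

theorem esymmBracket_self (b : (Fin m → g) → g) (N : Module.End K g) (x : Fin m → g) :
    esymmBracket b N m x = b (fun i => N (x i)) := by
  have : powersetCard m (univ : Finset (Fin m)) = {univ} := by
    simpa using powersetCard_self (univ : Finset (Fin m))
  simp [esymmBracket, this]

theorem nestedBracket_eq_sum (b : (Fin m → g) → g) (N : Module.End K g) (j : ℕ)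
    (x : Fin m → g) :
    nestedBracket b N j x = ∑ p ∈ range (j + 1), ((-N) ^ p) (esymmBracket b N (j - p) x) := by
  induction j with
  | zero => simp [nestedBracket, esymmBracket]
  | succ j ih =>
    rw [sum_range_succ']
    dsimp only [nestedBracket]
    rw [ih, map_sum, sub_eq_neg_add, ← sum_neg_distrib]
    congr 1
    refine sum_congr rfl fun p _ => ?_
    rw [pow_succ', Module.End.mul_apply, LinearMap.neg_apply, Nat.add_sub_add_right]

theorem isNijenhuis_iff_nestedBracket_eq_zero {n : ℕ} (b : (Fin (n + 1) → g) → g)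
    (N : Module.End K g) : IsNijenhuis b N ↔ ∀ x, nestedBracket b N (n + 1) x = 0 := by
  refine forall_congr' fun x => ?_
  rw [← sub_eq_zero, ← esymmBracket_self b N x]
  rfl

end NestedBracket

theorem Fin.map_valEmbedding_filter_lt {m p : ℕ} (hp : p ≤ m) :
    (univ.filter (fun j : Fin m => (j : ℕ) < p)).map Fin.valEmbedding = range p := by
  ext i
  simp only [mem_map, mem_filter, mem_univ, true_and, Fin.valEmbedding_apply, mem_range]
  exact ⟨fun ⟨j, hj, hji⟩ => hji ▸ hj, fun hi => ⟨⟨i, by omega⟩, hi, rfl⟩⟩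

def IsUnshuffle {m : ℕ} (p : ℕ) (σ : Perm (Fin m)) : Prop :=
  ∀ i j : Fin m, i < j → ((j : ℕ) < p ∨ p ≤ (i : ℕ)) → σ i < σ j

instance {m p : ℕ} : DecidablePred (IsUnshuffle (m := m) p) := fun σ => by
  unfold IsUnshuffle; infer_instance

namespace IsUnshuffle

variable {m p : ℕ} {σ : Perm (Fin m)}

theorem card_inversions_add (hσ : IsUnshuffle p σ) {i : Fin m} (hi : (i : ℕ) < p) :
    #{j ∈ Ioi i | σ j < σ i} + i = σ i := by
  have hsplit : ({j | σ j < σ i} : Finset (Fin m)) = {j ∈ Ioi i | σ j < σ i} ∪ Iio i := by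
    ext j
    rcases lt_trichotomy j i with hji | rfl | hij
    · simp [hji, hσ j i hji (Or.inl hi)]
    · simp
    · simp [hij, hij.not_gt]
  calc #{j ∈ Ioi i | σ j < σ i} + i
      = #({j | σ j < σ i} : Finset (Fin m)) := by
        rw [hsplit, card_union_of_disjoint, Fin.card_Iio]
        exact disjoint_left.2 fun j hj hj' =>
          (mem_Iio.1 hj').not_gt (mem_Ioi.1 (mem_filter.1 hj).1)
    _ = #(Iio (σ i)) := card_nbij' σ σ.symm (fun j => by simp) (fun j => by simp)
        (fun j _ => σ.symm_apply_apply j) (fun j _ => σ.apply_symm_apply j)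
    _ = σ i := Fin.card_Iio _

theorem sign_eq (hσ : IsUnshuffle p σ) :
    (Perm.sign σ : ℤ) =
      (-1) ^ ∑ j ∈ univ.filter (fun j : Fin m => (j : ℕ) < p), ((σ j : ℕ) + j) := by
  rw [Perm.sign_eq_prod_prod_Ioi, ← prod_pow_eq_pow_sum, prod_filter]
  simp only [Units.coe_prod, apply_ite Units.val, Units.val_one, Units.val_neg]
  refine prod_congr rfl fun i _ => ?_
  split_ifs with hi
  · have hinv : ({j ∈ Ioi i | ¬σ i < σ j} : Finset _) = {j ∈ Ioi i | σ j < σ i} :=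
      filter_congr fun j hj => by
        rw [not_lt, le_iff_lt_or_eq, σ.injective.eq_iff, or_iff_left (mem_Ioi.1 hj).ne']
    rw [prod_ite, prod_const_one, one_mul, prod_const, hinv, ← hσ.card_inversions_add hi,
      add_assoc, pow_add, ← two_mul, pow_mul, neg_one_sq, one_pow, mul_one]
  · exact prod_eq_one fun j hj => if_pos (hσ i j (mem_Ioi.1 hj) (Or.inr (not_lt.1 hi)))

end IsUnshuffle

section Blocks

variable {p q : ℕ}

theorem isUnshuffle_iff_strictMono {σ : Perm (Fin (p + q))} :
    IsUnshuffle p σ ↔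
      StrictMono (σ ∘ Fin.castAdd q) ∧ StrictMono (σ ∘ Fin.natAdd p) := by
  refine ⟨fun hσ => ⟨fun i j hij => hσ _ _ hij (Or.inl j.isLt),
    fun i j hij => hσ _ _ (by simpa using hij) (Or.inr (by simp))⟩, ?_⟩
  rintro ⟨hfst, hsnd⟩ i j hij (hj | hi)
  · exact hfst (a := ⟨i, by omega⟩) (b := ⟨j, hj⟩) hij
  · obtain ⟨i', rfl⟩ : ∃ i', Fin.natAdd p i' = i :=
      ⟨⟨i - p, by omega⟩, by ext; simp; omega⟩
    obtain ⟨j', rfl⟩ : ∃ j', Fin.natAdd p j' = j :=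
      ⟨⟨j - p, by omega⟩, by ext; simp; omega⟩
    exact hsnd (by simpa using hij)

theorem range_comp_castAdd_eq_compl (σ : Perm (Fin (p + q))) :
    Set.range (σ ∘ Fin.castAdd q) = (Set.range (σ ∘ Fin.natAdd p))ᶜ := by
  rw [Set.range_comp, Set.range_comp, ← σ.image_compl, Fin.range_natAdd]
  exact congrArg _ ((Fin.range_castLE _).trans (by ext; simp))

theorem IsUnshuffle.ext_of_range_eq {σ τ : Perm (Fin (p + q))} (hσ : IsUnshuffle p σ)
    (hτ : IsUnshuffle p τ)
    (h : Set.range (σ ∘ Fin.natAdd p) = Set.range (τ ∘ Fin.natAdd p)) : σ = τ := by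
  rw [isUnshuffle_iff_strictMono] at hσ hτ
  have hfst := (hσ.1.range_inj hτ.1).1 <| by
    rw [range_comp_castAdd_eq_compl, range_comp_castAdd_eq_compl, h]
  have hsnd := (hσ.2.range_inj hτ.2).1 h
  ext j
  induction j using Fin.addCases with
  | left i => exact congrArg Fin.val (congrFun hfst i)
  | right i => exact congrArg Fin.val (congrFun hsnd i)

theorem exists_isUnshuffle_range_eq (T : Finset (Fin (p + q))) (hT : #T = q) :
    ∃ σ : Perm (Fin (p + q)), IsUnshuffle p σ ∧ Set.range (σ ∘ Fin.natAdd p) = T := by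
  have hTc : #Tᶜ = p := by rw [card_compl, hT, Fintype.card_fin]; omega
  have hinj : Function.Injective (Fin.append (Tᶜ.orderEmbOfFin hTc) (T.orderEmbOfFin hT)) :=
    Fin.append_injective_iff.2 ⟨(Tᶜ.orderEmbOfFin hTc).injective,
      (T.orderEmbOfFin hT).injective, fun i j h =>
        mem_compl.1 (Tᶜ.orderEmbOfFin_mem hTc i) (h ▸ T.orderEmbOfFin_mem hT j)⟩
  let σ : Perm (Fin (p + q)) := Equiv.ofBijective _ (Finite.injective_iff_bijective.1 hinj)
  have hfst : σ ∘ Fin.castAdd q = Tᶜ.orderEmbOfFin hTc := funext (Fin.append_left _ _)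
  have hsnd : σ ∘ Fin.natAdd p = T.orderEmbOfFin hT := funext (Fin.append_right _ _)
  refine ⟨σ, isUnshuffle_iff_strictMono.2 ⟨?_, ?_⟩, ?_⟩
  · rw [hfst]; exact (Tᶜ.orderEmbOfFin hTc).strictMono
  · rw [hsnd]; exact (T.orderEmbOfFin hT).strictMono
  · rw [hsnd, range_orderEmbOfFin]

end Blocks

theorem sum_isUnshuffle_eq_sum_powersetCard {M : Type*} [AddCommMonoid M] {m p : ℕ}
    (hp : p ≤ m) (f : Finset (Fin m) → M) :
    ∑ σ ∈ univ.filter (IsUnshuffle p), f {i | p ≤ (σ.symm i : ℕ)} =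
      ∑ T ∈ powersetCard (m - p) univ, f T := by
  obtain ⟨q, rfl⟩ := Nat.exists_eq_add_of_le hp
  have hrange (σ : Perm (Fin (p + q))) :
      (({i | p ≤ (σ.symm i : ℕ)} : Finset _) : Set _) = Set.range (σ ∘ Fin.natAdd p) := by
    ext i
    simp [Set.range_comp, Fin.range_natAdd, σ.image_eq_preimage_symm]
  refine sum_nbij (fun σ => ({i | p ≤ (σ.symm i : ℕ)} : Finset _)) (fun σ _ => ?_) ?_ ?_
    (fun _ _ => rfl)
  · rw [mem_powersetCard_univ, Nat.add_sub_cancel_left, ← Set.ncard_coe_finset, hrange,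
      Set.ncard_range_of_injective (σ.injective.comp (Fin.natAdd_injective q p)),
      Nat.card_eq_fintype_card, Fintype.card_fin]
  · intro σ hσ τ hτ h
    exact (mem_filter.1 hσ).2.ext_of_range_eq (mem_filter.1 hτ).2 <| by
      rw [← hrange, ← hrange, coe_inj.2 h]
  · intro T hT
    rw [mem_coe, mem_powersetCard_univ, Nat.add_sub_cancel_left] at hT
    obtain ⟨σ, hσ, hσT⟩ := exists_isUnshuffle_range_eq T hT
    exact ⟨σ, mem_filter.2 ⟨mem_univ σ, hσ⟩, coe_inj.1 ((hrange σ).trans hσT)⟩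

theorem IsSkewMultilinear.sum_isUnshuffle_eq {K : Type*} [Field K] {g : Type*} [AddCommGroup g]
    [Module K g] {m : ℕ} {b : (Fin m → g) → g} (hb : IsSkewMultilinear K b)
    (N : Module.End K g) {p : ℕ} (hp : p ≤ m) (x : Fin m → g) :
    ∑ σ ∈ univ.filter (IsUnshuffle p),
      ((-1 : ℤ) ^ (p * (p - 1) / 2 +
          ∑ j ∈ univ.filter (fun j : Fin m => (j : ℕ) < p), ((σ j : ℕ) + 1))) •
        (N ^ p) (b (fun j => if (j : ℕ) < p then x (σ j) else N (x (σ j)))) =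
    ((-N) ^ p) (esymmBracket b N (m - p) x) := by
  rw [esymmBracket, map_sum, ← sum_isUnshuffle_eq_sum_powersetCard hp]
  refine sum_congr rfl fun σ hσ => ?_
  set F := univ.filter (fun j : Fin m => (j : ℕ) < p)
  set s := ∑ j ∈ F, (σ j : ℕ)
  have hcard : #F = p := by rw [← card_map, Fin.map_valEmbedding_filter_lt hp, card_range]
  have hsum : ∑ j ∈ F, (j : ℕ) = p * (p - 1) / 2 := by
    rw [← sum_range_id, ← Fin.map_valEmbedding_filter_lt hp, sum_map]; rfl
  set T : Finset (Fin m) := {i | p ≤ (σ.symm i : ℕ)} with hT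
  have harg : (fun j : Fin m => if (j : ℕ) < p then x (σ j) else N (x (σ j))) =
      (fun i => if i ∈ T then N (x i) else x i) ∘ σ := by
    funext j
    by_cases hj : (j : ℕ) < p <;> simp [hT, hj]
  rw [harg, hb.map_perm, (mem_filter.1 hσ).2.sign_eq, map_zsmul, smul_smul, ← pow_add,
    sum_add_distrib, sum_add_distrib, hsum, sum_const, hcard, smul_eq_mul, mul_one,
    show p * (p - 1) / 2 + (s + p) + (s + p * (p - 1) / 2) = p + 2 * (s + p * (p - 1) / 2) by ring,
    pow_add, pow_mul, neg_one_sq, one_pow, mul_one]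
  conv_rhs => rw [← neg_one_zsmul N, smul_pow, LinearMap.smul_apply]

/-- Here the arity is `n + 1` and positions are 0-indexed, so the paper's `σ(j)` is
`(σ j : ℕ) + 1`. -/
theorem isNijenhuis_iff_unshuffle_identity
    {K : Type*} [Field K] {g : Type*} [AddCommGroup g] [Module K g]
    {n : ℕ} (b : (Fin (n + 1) → g) → g) (hb : IsNLieBracket K b)
    (N : Module.End K g) :
    IsNijenhuis b N ↔
    (∀ x : Fin (n + 1) → g,
      ∑ p ∈ Finset.range (n + 2),
        ∑ σ ∈ Finset.univ.filter (fun σ : Equiv.Perm (Fin (n + 1)) =>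
            ∀ i j : Fin (n + 1), i < j → ((j : ℕ) < p ∨ p ≤ (i : ℕ)) → σ i < σ j),
          ((-1 : ℤ) ^ (p * (p - 1) / 2 +
              ∑ j ∈ Finset.univ.filter (fun j : Fin (n + 1) => (j : ℕ) < p), ((σ j : ℕ) + 1))) •
            (N ^ p) (b (fun j => if (j : ℕ) < p then x (σ j) else N (x (σ j)))) = 0) := by
  rw [isNijenhuis_iff_nestedBracket_eq_zero]
  refine forall_congr' fun x => Eq.congr_left ?_
  rw [nestedBracket_eq_sum]
  exact sum_congr rfl fun p hp =>
    (hb.1.sum_isUnshuffle_eq N (Nat.lt_succ_iff.1 (mem_range.1 hp)) x).symm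
end

section
/- Let g = ℂ³ with basis e₁, e₂, e₃, equipped with the trilinear skew-symmetric bracket determined by [e₁,e₂,e₃] = e₁ (this is a 3-Lie algebra; up to isomorphism it is the unique 3-dimensional non-abelian complex 3-Lie algebra). Then every linear map N : g → g is a Nijenhuis operator on g, i.e. [Nx, Ny, Nz] = N([x,y,z]_N²) for all x, y, z ∈ g. -/
/-- The 3-dimensional complex 3-Lie algebra: the trilinear skew-symmetric bracket
on `ℂ³` determined by `[e₁, e₂, e₃] = e₁` (for general vectors it is the
determinant of the coordinates times `e₁`). -/
noncomputable def threeDimBracket (x y z : Fin 3 → ℂ) : Fin 3 → ℂ :=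
  (x 0 * (y 1 * z 2) - x 0 * (y 2 * z 1) - x 1 * (y 0 * z 2) + x 1 * (y 2 * z 0)
      + x 2 * (y 0 * z 1) - x 2 * (y 1 * z 0)) • (Pi.single 0 1 : Fin 3 → ℂ)

/-- `N` is a Nijenhuis operator on the 3-Lie algebra `(A, br)`:
`[Nx,Ny,Nz] = N([x,y,z]_N²)` where
`[x,y,z]_N¹ = [Nx,y,z] + [x,Ny,z] + [x,y,Nz] − N[x,y,z]` and
`[x,y,z]_N² = [Nx,Ny,z] + [Nx,y,Nz] + [x,Ny,Nz] − N([x,y,z]_N¹)`. -/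
def IsNijenhuis3 (K : Type*) [Field K] {A : Type*} [AddCommGroup A] [Module K A]
    (br : A → A → A → A) (N : A →ₗ[K] A) : Prop :=
  ∀ x y z : A,
    br (N x) (N y) (N z)
      = N (br (N x) (N y) z + br (N x) y (N z) + br x (N y) (N z)
          - N (br (N x) y z + br x (N y) z + br x y (N z) - N (br x y z)))

/-!
Write the bracket as `[x, y, z] = D • e₁` with `D = det (x, y, z)`, and let `M` be the matrix of
`N`. Replacing one, two or all three rows of `(x, y, z)` by their images under `M` and summing
multiplies `D` by the principal invariants `tr M`, `I₂(M)`, `det M` of `M`, the coefficients of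
its characteristic polynomial. The Nijenhuis condition thus reads
`D • (M³ - tr M • M² + I₂(M) • M) e₁ = D • det M • e₁`, which is Cayley–Hamilton.
-/

open Matrix Polynomial

namespace Matrix

variable {R : Type*} [CommRing R]

def secondPrincipalInvariant (M : Matrix (Fin 3) (Fin 3) R) : R :=
  M 0 0 * M 1 1 - M 0 1 * M 1 0 + M 0 0 * M 2 2 - M 0 2 * M 2 0
    + M 1 1 * M 2 2 - M 1 2 * M 2 1

theorem charpoly_fin_three (M : Matrix (Fin 3) (Fin 3) R) :
    M.charpoly = X ^ 3 - C M.trace * X ^ 2 + C M.secondPrincipalInvariant * X - C M.det := by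
  simp only [charpoly, det_fin_three, charmatrix_apply_eq, charmatrix_apply_ne,
    ne_eq, Fin.reduceEq, not_false_eq_true, trace_fin_three, secondPrincipalInvariant,
    map_add, map_sub, map_mul]
  ring

theorem cayley_hamilton_fin_three (M : Matrix (Fin 3) (Fin 3) R) :
    M ^ 3 - M.trace • M ^ 2 + M.secondPrincipalInvariant • M = M.det • 1 := by
  have h := aeval_self_charpoly M
  rw [charpoly_fin_three] at h
  simp only [map_sub, map_add, map_mul, map_pow, aeval_X, aeval_C,
    Algebra.algebraMap_eq_smul_one, smul_mul_assoc, one_mul] at h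
  exact sub_eq_zero.mp h

theorem det_of_mulVec_rows (M : Matrix (Fin 3) (Fin 3) R) (x y z : Fin 3 → R) :
    det (of ![M *ᵥ x, M *ᵥ y, M *ᵥ z]) = M.det * det (of ![x, y, z]) := by
  have h : of ![M *ᵥ x, M *ᵥ y, M *ᵥ z] = of ![x, y, z] * Mᵀ := by
    ext i j
    fin_cases i <;> simp [mul_apply, mulVec, dotProduct, mul_comm]
  rw [h, det_mul, det_transpose, mul_comm]

theorem sum_det_of_mulVec_one_row (M : Matrix (Fin 3) (Fin 3) R) (x y z : Fin 3 → R) :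
    det (of ![M *ᵥ x, y, z]) + det (of ![x, M *ᵥ y, z]) + det (of ![x, y, M *ᵥ z])
      = M.trace * det (of ![x, y, z]) := by
  simp only [det_fin_three, trace_fin_three, of_apply, cons_val', cons_val_fin_one, cons_val_zero,
    cons_val_one, cons_val, mulVec, dotProduct, Fin.sum_univ_three]
  ring

theorem sum_det_of_mulVec_two_rows (M : Matrix (Fin 3) (Fin 3) R) (x y z : Fin 3 → R) :
    det (of ![M *ᵥ x, M *ᵥ y, z]) + det (of ![M *ᵥ x, y, M *ᵥ z])
        + det (of ![x, M *ᵥ y, M *ᵥ z])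
      = M.secondPrincipalInvariant * det (of ![x, y, z]) := by
  simp only [det_fin_three, secondPrincipalInvariant, of_apply, cons_val', cons_val_fin_one,
    cons_val_zero, cons_val_one, cons_val, mulVec, dotProduct, Fin.sum_univ_three]
  ring

end Matrix

theorem isNijenhuis3_det_smul {K : Type*} [Field K] (e : Fin 3 → K)
    (N : (Fin 3 → K) →ₗ[K] (Fin 3 → K)) :
    IsNijenhuis3 K (fun x y z => det (of ![x, y, z]) • e) N := by
  intro x y z
  set M := LinearMap.toMatrix' N
  have hN : ∀ v, N v = M *ᵥ v := fun v => (LinearMap.toMatrix'_mulVec N v).symm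
  simp only [hN, ← add_smul, det_of_mulVec_rows, sum_det_of_mulVec_one_row,
    sum_det_of_mulVec_two_rows]
  have hCH := congrArg (· *ᵥ e) M.cayley_hamilton_fin_three
  simp only [sub_mulVec, add_mulVec, smul_mulVec, one_mulVec, pow_succ, pow_zero, one_mul,
    ← mulVec_mulVec] at hCH
  simp only [mulVec_sub, mulVec_smul]
  linear_combination (norm := module) -(det (of ![x, y, z])) • hCH

theorem threeDimBracket_eq_det_smul :
    threeDimBracket = fun x y z => det (of ![x, y, z]) • Pi.single 0 1 := by
  funext x y z
  rw [threeDimBracket, det_fin_three]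
  congr 1
  simp only [of_apply, cons_val', cons_val_fin_one, cons_val_zero, cons_val_one, cons_val]
  ring

/-- Every linear map on the 3-dimensional non-abelian complex
3-Lie algebra (with `[e₁,e₂,e₃] = e₁`) is a Nijenhuis operator. -/
theorem every_linear_map_is_nijenhuis_threeDim
    (N : (Fin 3 → ℂ) →ₗ[ℂ] (Fin 3 → ℂ)) :
    IsNijenhuis3 ℂ threeDimBracket N := by
  rw [threeDimBracket_eq_det_smul]
  exact isNijenhuis3_det_smul _ N
end

section
/- Let (g, [·,…,·]) be an n-Lie algebra over a field K and (V; ρ) a representation of g, and equip g ⊕ V with the semidirect product n-Lie bracket [x₁+v₁,…,xₙ+vₙ] = [x₁,…,xₙ] + Σ_{i=1}^{n} (−1)^{n−i} ρ(x₁,…,x̂ᵢ,…,xₙ)(vᵢ). Then a linear map T : V → g is an O-operator if and only if the linear map T̄ : g ⊕ V → g ⊕ V defined by T̄(x + v) = Tv + 0 (i.e. the block matrix (0 T; 0 0)) is a Nijenhuis operator on the semidirect product n-Lie algebra g ⋉_ρ V. -/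
/-!
`T̄ = (0 T; 0 0)` squares to zero, so in `T̄([x₁,…,xₙ]_T̄^{n−1})` the recursive correction term
is killed and only the brackets with `T̄` applied in `n − 1` slots survive. Such a bracket has a
single argument left in `V`, so its image under `T̄` is `(−1)^{n−i} T(ρ(Tv₁,…,T̂vᵢ,…,Tvₙ)(vᵢ))`;
on the other side `[T̄x₁,…,T̄xₙ] = [Tv₁,…,Tvₙ]`. Both sides depend only on the `V`-components,
so the Nijenhuis identity for `T̄` is exactly the `𝒪`-operator identity for `T`.
-/

open Finset

/-- The semidirect product bracket on `g ⊕ V` associated to an `(n+2)`-ary bracket `b`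
on `g` and a representation `ρ : g^{n+1} → End V`:
`[x₁+v₁,…,x_{n+2}+v_{n+2}] = [x₁,…,x_{n+2}] + ∑ᵢ (−1)^{(n+2)−i} ρ(x₁,…,x̂ᵢ,…,x_{n+2})(vᵢ)`. -/
def semidirectBracket {K : Type*} [Field K] {g V : Type*} [AddCommGroup g] [Module K g]
    [AddCommGroup V] [Module K V] {n : ℕ} (b : (Fin (n + 2) → g) → g)
    (ρ : (Fin (n + 1) → g) → Module.End K V) (w : Fin (n + 2) → g × V) : g × V :=
  (b (fun i => (w i).1),
   ∑ i : Fin (n + 2),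
     ((-1 : ℤ) ^ (n + 2 - ((i : ℕ) + 1))) • ρ (fun j => (w (i.succAbove j)).1) ((w i).2))

theorem Finset.sum_powersetCard_univ_eq_sum_compl_singleton {α β : Type*} [Fintype α]
    [DecidableEq α] [AddCommMonoid β] {k : ℕ} (hk : k + 1 = Fintype.card α)
    (f : Finset α → β) :
    ∑ S ∈ powersetCard k univ, f S = ∑ i, f {i}ᶜ := by
  have himage : powersetCard k (univ : Finset α) = univ.image fun i => {i}ᶜ := by
    ext S
    simp only [mem_powersetCard_univ, mem_image, mem_univ, true_and]
    constructor
    · intro hS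
      obtain ⟨i, hi⟩ := card_eq_one.mp (by rw [card_compl, hS]; omega : Sᶜ.card = 1)
      exact ⟨i, by rw [← hi, compl_compl]⟩
    · rintro ⟨i, rfl⟩
      rw [card_compl, card_singleton]
      omega
  rw [himage, sum_image fun i _ j _ h => by simpa using compl_injective h]

theorem map_nestedBracket_succ_of_mul_self_eq_zero {K g : Type*} [Field K] [AddCommGroup g]
    [Module K g] {m : ℕ} (b : (Fin m → g) → g) {N : Module.End K g} (hN : N * N = 0) (j : ℕ)
    (x : Fin m → g) :
    N (nestedBracket b N (j + 1) x)
      = ∑ S ∈ powersetCard (j + 1) univ, N (b fun i => if i ∈ S then N (x i) else x i) := by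
  rw [nestedBracket, map_sub, map_sum, ← Module.End.mul_apply, hN, LinearMap.zero_apply,
    sub_zero]

section Semidirect

variable {K g V : Type*} [Field K] [AddCommGroup g] [Module K g] [AddCommGroup V] [Module K V]
  {n : ℕ} (b : (Fin (n + 2) → g) → g) (ρ : (Fin (n + 1) → g) → Module.End K V)

theorem semidirectBracket_inl (x : Fin (n + 2) → g) :
    semidirectBracket b ρ (fun i => (x i, 0)) = (b x, 0) := by
  simp [semidirectBracket]

theorem semidirectBracket_snd_of_snd_eq_zero {w : Fin (n + 2) → g × V} (i : Fin (n + 2))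
    (hw : ∀ k ≠ i, (w k).2 = 0) :
    (semidirectBracket b ρ w).2
      = ((-1 : ℤ) ^ (n + 2 - ((i : ℕ) + 1))) • ρ (fun j => (w (i.succAbove j)).1) (w i).2 := by
  refine Fintype.sum_eq_single i fun k hk => ?_
  rw [hw k hk, map_zero, smul_zero]

theorem inl_comp_snd_mul_self (T : V →ₗ[K] g) :
    (LinearMap.inl K g V).comp (T.comp (LinearMap.snd K g V))
      * (LinearMap.inl K g V).comp (T.comp (LinearMap.snd K g V)) = 0 := by
  ext <;> simp

theorem inl_comp_snd_apply_nestedBracket (T : V →ₗ[K] g) (w : Fin (n + 2) → g × V) :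
    (LinearMap.inl K g V).comp (T.comp (LinearMap.snd K g V))
        (nestedBracket (semidirectBracket b ρ)
          ((LinearMap.inl K g V).comp (T.comp (LinearMap.snd K g V))) (n + 1) w)
      = (∑ i : Fin (n + 2), ((-1 : ℤ) ^ (n + 2 - ((i : ℕ) + 1))) •
          T (ρ (fun j => T (w (i.succAbove j)).2) (w i).2), 0) := by
  classical
  rw [map_nestedBracket_succ_of_mul_self_eq_zero _ (inl_comp_snd_mul_self T),
    sum_powersetCard_univ_eq_sum_compl_singleton (by simp)]
  refine Prod.ext ?_ (by simp [Prod.snd_sum])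
  simp only [Prod.fst_sum, LinearMap.coe_comp, Function.comp_apply, LinearMap.coe_inl,
    LinearMap.snd_apply]
  refine sum_congr rfl fun i _ => ?_
  rw [semidirectBracket_snd_of_snd_eq_zero b ρ i fun k hk => by simp [hk], map_zsmul]
  simp [Fin.succAbove_ne]

end Semidirect

theorem oOperator_iff_nijenhuis_on_semidirect_general
    {K : Type*} [Field K] {g V : Type*} [AddCommGroup g] [Module K g]
    [AddCommGroup V] [Module K V] {n : ℕ}
    (b : (Fin (n + 2) → g) → g)
    (ρ : (Fin (n + 1) → g) → Module.End K V)
    (T : V →ₗ[K] g) :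
    (∀ v : Fin (n + 2) → V,
        b (fun i => T (v i))
          = ∑ i : Fin (n + 2),
              ((-1 : ℤ) ^ (n + 2 - ((i : ℕ) + 1))) •
                T (ρ (fun j => T (v (i.succAbove j))) (v i))) ↔
    IsNijenhuis (semidirectBracket b ρ)
      ((LinearMap.inl K g V).comp (T.comp (LinearMap.snd K g V))) := by
  have hlhs : ∀ w : Fin (n + 2) → g × V,
      semidirectBracket b ρ (fun i => (LinearMap.inl K g V).comp (T.comp (LinearMap.snd K g V))
        (w i)) = (b fun i => T (w i).2, 0) :=
    fun w => semidirectBracket_inl b ρ fun i => T (w i).2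
  refine ⟨fun hT w => ?_, fun hN v => ?_⟩
  · rw [hlhs, inl_comp_snd_apply_nestedBracket, hT]
  · have h := hN fun i => (0, v i)
    rw [hlhs, inl_comp_snd_apply_nestedBracket] at h
    exact congrArg Prod.fst h

/-- Let `(g, b)` be an `(n+2)`-Lie algebra and `(V, ρ)` a
representation.  A linear map `T : V → g` is an `𝒪`-operator iff
`T̄ = (0 T; 0 0) : g ⊕ V → g ⊕ V`, `x + v ↦ Tv`, is a Nijenhuis operator on the
semidirect product `(n+2)`-Lie algebra `g ⋉_ρ V`. -/
theorem oOperator_iff_nijenhuis_on_semidirect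
    {K : Type*} [Field K] {g V : Type*} [AddCommGroup g] [Module K g]
    [AddCommGroup V] [Module K V] {n : ℕ}
    (b : (Fin (n + 2) → g) → g) (hb : IsNLieBracket K b)
    (ρ : (Fin (n + 1) → g) → Module.End K V)
    (hρskew : IsSkewMultilinear K ρ)
    (hρ1 : ∀ X Y : Fin (n + 1) → g,
      ρ X * ρ Y - ρ Y * ρ X
        = ∑ i : Fin (n + 1), ρ (Function.update Y i (b (Fin.snoc X (Y i)))))
    (hρ2 : ∀ (x : Fin n → g) (y : Fin (n + 2) → g),
      ρ (Fin.snoc x (b y))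
        = ∑ i : Fin (n + 2),
            ((-1 : ℤ) ^ (n + 2 - ((i : ℕ) + 1))) •
              (ρ (fun j => y (i.succAbove j)) * ρ (Fin.snoc x (y i))))
    (T : V →ₗ[K] g) :
    (∀ v : Fin (n + 2) → V,
        b (fun i => T (v i))
          = ∑ i : Fin (n + 2),
              ((-1 : ℤ) ^ (n + 2 - ((i : ℕ) + 1))) •
                T (ρ (fun j => T (v (i.succAbove j))) (v i))) ↔
    IsNijenhuis (semidirectBracket b ρ)
      ((LinearMap.inl K g V).comp (T.comp (LinearMap.snd K g V))) :=
  oOperator_iff_nijenhuis_on_semidirect_general b ρ T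
end

section
/- Let (g, [·,…,·]) be an n-Lie algebra over a field K and let f : g → K be a linear functional satisfying f([x₁,…,xₙ]) = 0 for all x₁,…,xₙ ∈ g. Then the (n+1)-linear bracket defined by {x₁,…,x_{n+1}} = Σ_{i=1}^{n+1} (−1)^{i−1} f(xᵢ) [x₁,…,x̂ᵢ,…,x_{n+1}] (where x̂ᵢ means xᵢ is omitted) is skew-symmetric and satisfies the Filippov identity, i.e. (g, {·,…,·}) is an (n+1)-Lie algebra. -/
/-!
The new bracket `C = Σᵢ (-1)ⁱ f(yᵢ) [ŷᵢ]` is `AlternatingMap.alternatizeUncurryFin` of `f ⊗ [·]`,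
hence alternating. For the Filippov identity, expand the inner derivation `w ↦ C(x, w)` as
`Σₖ (-1)ᵏ f(xₖ) [x̂ₖ, w] + (-1)ⁿ⁺¹ f(w) [x]`; derivations of `C` form a submodule, so it is enough
that each summand is one. An inner derivation `D` of `[·]` satisfies `f ∘ D = 0`, so when `D` is
applied to `C(y)` the terms where it would hit a coefficient `f(yᵢ)` vanish and `D` is a derivation
of `C`. The map `w ↦ f(w) z` with `f(z) = 0` sends `C(y)` to `0` since `f` kills brackets, and
`Σₚ f(yₚ) C(y with z in slot p)` vanishes because its `(p, i)` and `(i, p)` terms cancel by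
skew-symmetry.
-/

open Finset

open Function

theorem Fin.removeNth_castSucc_snoc {α : Type*} {n : ℕ} (x : Fin (n + 1) → α) (w : α)
    (k : Fin (n + 1)) :
    k.castSucc.removeNth (Fin.snoc x w : Fin (n + 2) → α) = Fin.snoc (k.removeNth x) w := by
  ext j
  induction j using Fin.lastCases with
  | last => simp [Fin.removeNth_apply]
  | cast j => simp [Fin.removeNth_apply]

namespace AlternatingMap

variable {R M : Type*} [CommRing R] [AddCommGroup M] [Module R M]

section Derivations

variable {ι : Type*} [Fintype ι] [DecidableEq ι]

def derivations (B : M [⋀^ι]→ₗ[R] M) : Submodule R (Module.End R M) where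
  carrier := {D | ∀ v, D (B v) = ∑ i, B (update v i (D (v i)))}
  zero_mem' v := by simp
  add_mem' {D E} hD hE v := by
    simp [hD v, hE v, B.map_update_add, Finset.sum_add_distrib]
  smul_mem' c D hD v := by simp [hD v, B.map_update_smul, Finset.smul_sum]

theorem mem_derivations {B : M [⋀^ι]→ₗ[R] M} {D : Module.End R M} :
    D ∈ B.derivations ↔ ∀ v, D (B v) = ∑ i, B (update v i (D (v i))) :=
  Iff.rfl

end Derivations

variable {n : ℕ}

def adSnoc (B : M [⋀^Fin (n + 1)]→ₗ[R] M) (x : Fin n → M) : Module.End R M :=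
  B.toMultilinearMap.toLinearMap (Fin.snoc x 0) (Fin.last n)

@[simp]
theorem adSnoc_apply (B : M [⋀^Fin (n + 1)]→ₗ[R] M) (x : Fin n → M) (w : M) :
    B.adSnoc x w = B (Fin.snoc x w) := by
  simp [adSnoc, Fin.update_snoc_last]

theorem isFilippov_iff_adSnoc_mem_derivations (B : M [⋀^Fin (n + 1)]→ₗ[R] M) :
    IsFilippov B ↔ ∀ x, B.adSnoc x ∈ B.derivations := by
  simp [IsFilippov, mem_derivations]

theorem alternatizeUncurryFin_smulRight_apply (B : M [⋀^Fin n]→ₗ[R] M) (f : M →ₗ[R] R)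
    (v : Fin (n + 1) → M) :
    alternatizeUncurryFin (f.smulRight B) v =
      ∑ i : Fin (n + 1), ((-1 : R) ^ (i : ℕ) * f (v i)) • B (i.removeNth v) := by
  simp [alternatizeUncurryFin_apply, mul_smul, ← Int.cast_smul_eq_zsmul R]

section Extension

variable (B : M [⋀^Fin n]→ₗ[R] M) (f : M →ₗ[R] R)

theorem map_alternatizeUncurryFin_smulRight_eq_zero (hfB : ∀ v, f (B v) = 0)
    (v : Fin (n + 1) → M) : f (alternatizeUncurryFin (f.smulRight B) v) = 0 := by
  simp [alternatizeUncurryFin_smulRight_apply, hfB]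

variable {B f}

theorem mem_derivations_alternatizeUncurryFin_smulRight {D : Module.End R M}
    (hD : D ∈ B.derivations) (hfD : ∀ w, f (D w) = 0) :
    D ∈ (alternatizeUncurryFin (f.smulRight B)).derivations := by
  intro y
  simp only [alternatizeUncurryFin_smulRight_apply, map_sum, map_smul]
  rw [Finset.sum_comm]
  refine Finset.sum_congr rfl fun i _ => ?_
  rw [Fin.sum_univ_succAbove _ i]
  simp [hfD, hD (i.removeNth y), Finset.smul_sum, Fin.removeNth_apply]

theorem sum_smul_alternatizeUncurryFin_smulRight_update {z : M} (hz : f z = 0)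
    (y : Fin (n + 1) → M) :
    ∑ p, f (y p) • alternatizeUncurryFin (f.smulRight B) (update y p z) = 0 := by
  simp only [alternatizeUncurryFin_smulRight_apply, Finset.smul_sum, ← Finset.sum_product',
    Finset.univ_product_univ]
  have diag (p : Fin (n + 1)) :
      f (y p) • ((-1 : R) ^ (p : ℕ) * f (update y p z p)) • B (p.removeNth (update y p z)) = 0 := by
    simp [hz]
  refine Finset.sum_ninvolution Prod.swap (fun ⟨p, i⟩ => ?_) (fun ⟨p, i⟩ h hpi => ?_)
    (fun _ => Finset.mem_univ _) Prod.swap_swap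
  · rcases eq_or_ne p i with rfl | hpi
    · simp only [Prod.swap_prod_mk, diag, add_zero]
    -- both terms delete one of the two copies of `z` from `Z`
    set Z := update (update y p z) i z
    have hZ : Z i = Z p := by simp [Z, update_of_ne hpi]
    have key := neg_one_pow_smul_map_removeNth_add_eq_zero_of_eq B hZ hpi.symm
    have hZi : i.removeNth Z = i.removeNth (update y p z) := Fin.removeNth_update ..
    have hZp : p.removeNth Z = p.removeNth (update y i z) := by
      rw [show Z = _ from update_comm hpi z z y, Fin.removeNth_update]
    rw [hZi, hZp] at key
    simp only [Prod.swap_prod_mk, update_of_ne hpi, update_of_ne hpi.symm]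
    rw [← smul_zero (f (y p) * f (y i)), ← key]
    module
  · obtain rfl : i = p := (Prod.mk.inj hpi).1
    exact h (diag i)

theorem smulRight_mem_derivations_alternatizeUncurryFin_smulRight (hfB : ∀ v, f (B v) = 0)
    {z : M} (hz : f z = 0) :
    f.smulRight z ∈ (alternatizeUncurryFin (f.smulRight B)).derivations := by
  intro y
  simp only [LinearMap.smulRight_apply, map_alternatizeUncurryFin_smulRight_eq_zero B f hfB,
    zero_smul, map_update_smul]
  exact (sum_smul_alternatizeUncurryFin_smulRight_update hz y).symm

end Extension

variable (B : M [⋀^Fin (n + 1)]→ₗ[R] M) (f : M →ₗ[R] R)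

theorem adSnoc_alternatizeUncurryFin_smulRight (x : Fin (n + 1) → M) :
    (alternatizeUncurryFin (f.smulRight B)).adSnoc x =
      ∑ k : Fin (n + 1), ((-1 : R) ^ (k : ℕ) * f (x k)) • B.adSnoc (k.removeNth x) +
        (-1 : R) ^ (n + 1) • f.smulRight (B x) := by
  ext w
  simp [alternatizeUncurryFin_smulRight_apply, Fin.sum_univ_castSucc, Fin.removeNth_castSucc_snoc,
    mul_smul]

theorem isFilippov_alternatizeUncurryFin_smulRight (hB : IsFilippov B) (hfB : ∀ v, f (B v) = 0) :
    IsFilippov (alternatizeUncurryFin (f.smulRight B)) := by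
  rw [isFilippov_iff_adSnoc_mem_derivations] at hB ⊢
  intro x
  rw [adSnoc_alternatizeUncurryFin_smulRight]
  refine add_mem (sum_mem fun k _ => Submodule.smul_mem _ _ ?_) (Submodule.smul_mem _ _ ?_)
  · exact mem_derivations_alternatizeUncurryFin_smulRight (hB _) fun w => by simp [hfB]
  · exact smulRight_mem_derivations_alternatizeUncurryFin_smulRight hfB (hfB x)

end AlternatingMap

section SkewMultilinear

variable {K g W : Type*} [Field K] [AddCommGroup g] [Module K g] [AddCommGroup W] [Module K W]
  {m : ℕ}

def IsSkewMultilinear.toAlternatingMap_s8 {b : (Fin m → g) → W} (hb : IsSkewMultilinear K b) :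
    g [⋀^Fin m]→ₗ[K] W where
  toFun := b
  map_update_add' x i u v := by convert hb.1 x i u v
  map_update_smul' x i c u := by convert hb.2.1 x i c u
  map_eq_zero_of_eq' x i j hx hij := hb.2.2 x i j hij hx

theorem AlternatingMap.isSkewMultilinear (B : g [⋀^Fin m]→ₗ[K] W) : IsSkewMultilinear K B :=
  ⟨fun x => B.map_update_add x, fun x => B.map_update_smul x,
    fun x _ _ hij hx => B.map_eq_zero_of_eq x hx hij⟩

end SkewMultilinear

/-- Let `(g, b)` be an `(n+1)`-Lie algebra over `K` and `f : g → K`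
a linear functional vanishing on brackets.  Then
`{x₁,…,x_{n+2}} = ∑_{i=1}^{n+2} (−1)^{i−1} f(xᵢ) [x₁,…,x̂ᵢ,…,x_{n+2}]`
is an `(n+2)`-Lie algebra bracket on `g`. -/
theorem functional_extension_is_nLie
    {K : Type*} [Field K] {g : Type*} [AddCommGroup g] [Module K g]
    {n : ℕ} (b : (Fin (n + 1) → g) → g) (hb : IsNLieBracket K b)
    (f : g →ₗ[K] K) (hf : ∀ x : Fin (n + 1) → g, f (b x) = 0) :
    IsNLieBracket K (fun y : Fin (n + 2) → g =>
      ∑ i : Fin (n + 2), ((-1 : K) ^ (i : ℕ) * f (y i)) • b (fun j => y (i.succAbove j))) := by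
  obtain ⟨hskew, hfil⟩ := hb
  let B := hskew.toAlternatingMap_s8
  have hC : (fun y : Fin (n + 2) → g =>
      ∑ i : Fin (n + 2), ((-1 : K) ^ (i : ℕ) * f (y i)) • b (fun j => y (i.succAbove j))) =
        AlternatingMap.alternatizeUncurryFin (f.smulRight B) :=
    funext fun y => (AlternatingMap.alternatizeUncurryFin_smulRight_apply B f y).symm
  rw [hC]
  exact ⟨AlternatingMap.isSkewMultilinear _,
    AlternatingMap.isFilippov_alternatizeUncurryFin_smulRight B f hfil hf⟩
end

section
/- Let (g, ·) be a commutative associative algebra over a field K, let D : g → g be a derivation (D(x·y) = D(x)·y + x·D(y)), and let f : g → K be a linear functional satisfying f(D(x)·y) = f(x·D(y)) for all x, y ∈ g. Then the trilinear bracket ⟦x,y,z⟧ = f(x)(D(y)·z − D(z)·y) + f(y)(D(z)·x − D(x)·z) + f(z)(D(x)·y − D(y)·x) is skew-symmetric and satisfies the Filippov identity, i.e. (g, ⟦·,·,·⟧) is a 3-Lie algebra. -/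
/-- `br` is a 3-Lie algebra bracket over `K`: trilinear, alternating (skew-symmetric)
and satisfying the Filippov identity. -/
def Is3LieBracket (K : Type*) [Field K] {A : Type*} [AddCommGroup A] [Module K A]
    (br : A → A → A → A) : Prop :=
  (∀ x₁ x₂ y z, br (x₁ + x₂) y z = br x₁ y z + br x₂ y z) ∧
  (∀ (c : K) (x y z : A), br (c • x) y z = c • br x y z) ∧
  (∀ x y₁ y₂ z, br x (y₁ + y₂) z = br x y₁ z + br x y₂ z) ∧
  (∀ (c : K) (x y z : A), br x (c • y) z = c • br x y z) ∧
  (∀ x y z₁ z₂, br x y (z₁ + z₂) = br x y z₁ + br x y z₂) ∧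
  (∀ (c : K) (x y z : A), br x y (c • z) = c • br x y z) ∧
  (∀ x y, br x x y = 0) ∧ (∀ x y, br x y y = 0) ∧ (∀ x y, br x y x = 0) ∧
  (∀ x y a b c, br x y (br a b c) = br (br x y a) b c + br a (br x y b) c + br a b (br x y c))

/-!
The bracket is the classical construction of a 3-Lie algebra from a Lie algebra `(A, μ)` and a
trace `f` (a functional vanishing on `μ`): `⟦x,y,z⟧ = f x • μ y z + f y • μ z x + f z • μ x y`,
here for the Witt-type Lie bracket `μ x y = D x * y - D y * x` of a commutative algebra with a
derivation; the hypothesis on `f` says exactly that `f` kills `μ`.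

For the Filippov identity write `⟦x,y,w⟧ = T w + f w • μ x y` with `T = f x • μ y - f y • μ x`.
By the Jacobi identity `T` is a derivation of `μ`, and it takes values in `ker f`; such a map
is a derivation of `⟦·,·,·⟧`. The correction term `f w • μ x y` contributes nothing to the
left-hand side since `f ⟦a,b,c⟧ = 0`, and cancels on the right-hand side by antisymmetry of `μ`.
-/

section TraceBracket

variable {K A : Type*} [Field K] [AddCommGroup A] [Module K A]
  (μ : A →ₗ[K] A →ₗ[K] A) (f : A →ₗ[K] K)

def traceBracket (x y z : A) : A :=
  f x • μ y z + f y • μ z x + f z • μ x y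

variable {μ f}

theorem traceBracket_cycle (x y z : A) :
    traceBracket μ f x y z = traceBracket μ f y z x := by
  unfold traceBracket
  abel

theorem traceBracket_add_left (x₁ x₂ y z : A) :
    traceBracket μ f (x₁ + x₂) y z = traceBracket μ f x₁ y z + traceBracket μ f x₂ y z := by
  simp only [traceBracket, map_add, LinearMap.add_apply, add_smul, smul_add]
  abel

theorem traceBracket_smul_left (c : K) (x y z : A) :
    traceBracket μ f (c • x) y z = c • traceBracket μ f x y z := by
  simp only [traceBracket, map_smul, LinearMap.smul_apply, smul_eq_mul]
  module

theorem traceBracket_add_middle (x y₁ y₂ z : A) :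
    traceBracket μ f x (y₁ + y₂) z = traceBracket μ f x y₁ z + traceBracket μ f x y₂ z := by
  rw [traceBracket_cycle x, traceBracket_add_left, ← traceBracket_cycle x y₁ z,
    ← traceBracket_cycle x y₂ z]

theorem traceBracket_smul_middle (c : K) (x y z : A) :
    traceBracket μ f x (c • y) z = c • traceBracket μ f x y z := by
  rw [traceBracket_cycle x, traceBracket_smul_left, ← traceBracket_cycle x y z]

theorem traceBracket_add_right (x y z₁ z₂ : A) :
    traceBracket μ f x y (z₁ + z₂) = traceBracket μ f x y z₁ + traceBracket μ f x y z₂ := by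
  rw [← traceBracket_cycle (z₁ + z₂), traceBracket_add_left, traceBracket_cycle z₁,
    traceBracket_cycle z₂]

theorem traceBracket_smul_right (c : K) (x y z : A) :
    traceBracket μ f x y (c • z) = c • traceBracket μ f x y z := by
  rw [← traceBracket_cycle (c • z), traceBracket_smul_left, traceBracket_cycle z]

theorem traceBracket_self_left (hμ : μ.IsAlt) (x y : A) : traceBracket μ f x x y = 0 := by
  rw [traceBracket, hμ.self_eq_zero, ← hμ.neg, smul_neg, smul_zero, neg_add_cancel, add_zero]

theorem apply_traceBracket_eq_zero (hf : ∀ u v, f (μ u v) = 0) (x y z : A) :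
    f (traceBracket μ f x y z) = 0 := by
  simp only [traceBracket, map_add, map_smul, hf, smul_zero, add_zero]

theorem traceBracket_map_of_isDerivation {T : A →ₗ[K] A}
    (hT : ∀ u v, T (μ u v) = μ (T u) v + μ u (T v)) (hfT : ∀ u, f (T u) = 0) (a b c : A) :
    T (traceBracket μ f a b c) =
      traceBracket μ f (T a) b c + traceBracket μ f a (T b) c + traceBracket μ f a b (T c) := by
  simp only [traceBracket, map_add, map_smul, hT, hfT, zero_smul, smul_add]
  abel

theorem smul_traceBracket_add_smul_traceBracket_add_smul_traceBracket (hμ : μ.IsAlt) {m : A}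
    (hm : f m = 0) (a b c : A) :
    f a • traceBracket μ f m b c + f b • traceBracket μ f a m c + f c • traceBracket μ f a b m
      = 0 := by
  simp only [traceBracket, hm, zero_smul, add_zero, zero_add, ← hμ.neg m]
  module

theorem traceBracket_filippov (hμ : μ.IsAlt)
    (hJ : ∀ x u v, μ x (μ u v) = μ (μ x u) v + μ u (μ x v)) (hf : ∀ u v, f (μ u v) = 0)
    (x y a b c : A) :
    traceBracket μ f x y (traceBracket μ f a b c) =
      traceBracket μ f (traceBracket μ f x y a) b c + traceBracket μ f a (traceBracket μ f x y b) c
        + traceBracket μ f a b (traceBracket μ f x y c) := by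
  set T : A →ₗ[K] A := f x • μ y - f y • μ x
  have hsplit : ∀ w, traceBracket μ f x y w = T w + f w • μ x y := fun w => by
    simp only [T, traceBracket, LinearMap.sub_apply, LinearMap.smul_apply, ← hμ.neg x w]
    module
  have hT : ∀ u v, T (μ u v) = μ (T u) v + μ u (T v) := fun u v => by
    simp only [T, LinearMap.sub_apply, LinearMap.smul_apply, map_sub, map_smul]
    rw [hJ y u v, hJ x u v]
    module
  have hfT : ∀ u, f (T u) = 0 := fun u => by simp [T, hf]
  rw [hsplit, apply_traceBracket_eq_zero hf, zero_smul, add_zero,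
    traceBracket_map_of_isDerivation hT hfT, hsplit a, hsplit b, hsplit c,
    traceBracket_add_left, traceBracket_add_middle, traceBracket_add_right,
    traceBracket_smul_left, traceBracket_smul_middle, traceBracket_smul_right]
  linear_combination (norm := module)
    -smul_traceBracket_add_smul_traceBracket_add_smul_traceBracket (μ := μ) hμ (hf x y) a b c

theorem is3LieBracket_traceBracket (hμ : μ.IsAlt)
    (hJ : ∀ x u v, μ x (μ u v) = μ (μ x u) v + μ u (μ x v)) (hf : ∀ u v, f (μ u v) = 0) :
    Is3LieBracket K (traceBracket μ f) :=
  ⟨traceBracket_add_left, traceBracket_smul_left, traceBracket_add_middle,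
    traceBracket_smul_middle, traceBracket_add_right, traceBracket_smul_right,
    traceBracket_self_left hμ,
    fun x y => by rw [traceBracket_cycle, traceBracket_self_left hμ],
    fun x y => by rw [← traceBracket_cycle, traceBracket_self_left hμ],
    traceBracket_filippov hμ hJ hf⟩

end TraceBracket

section WittBracket

variable {K A : Type*} [Field K] [NonUnitalCommRing A] [Module K A] [SMulCommClass K A A]
  [IsScalarTower K A A] (D : A →ₗ[K] A)

def wittBracket : A →ₗ[K] A →ₗ[K] A :=
  LinearMap.mul K A ∘ₗ D - (LinearMap.mul K A ∘ₗ D).flip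

@[simp]
theorem wittBracket_apply (x y : A) : wittBracket D x y = D x * y - D y * x := rfl

theorem isAlt_wittBracket : (wittBracket D).IsAlt := fun x => sub_self (D x * x)

theorem wittBracket_leibniz (hD : ∀ x y : A, D (x * y) = D x * y + x * D y) (x u v : A) :
    wittBracket D x (wittBracket D u v) =
      wittBracket D (wittBracket D x u) v + wittBracket D u (wittBracket D x v) := by
  simp only [wittBracket_apply, map_sub, LinearMap.sub_apply, hD, add_mul]
  simp only [mul_comm, mul_left_comm]
  abel

theorem apply_wittBracket_eq_zero {f : A →ₗ[K] K} (hf : ∀ x y : A, f (D x * y) = f (x * D y))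
    (x y : A) : f (wittBracket D x y) = 0 := by
  rw [wittBracket_apply, map_sub, hf, mul_comm, sub_self]

end WittBracket

/-- Let `(A, *)` be a commutative associative algebra over a field
`K`, `D` a derivation and `f : A → K` a linear functional with `f(D(x)·y) = f(x·D(y))`.
Then `⟦x,y,z⟧ = f(x)(D(y)z − D(z)y) + f(y)(D(z)x − D(x)z) + f(z)(D(x)y − D(y)x)`
is a 3-Lie algebra bracket on `A`. -/
theorem derivation_functional_threeLie
    {K : Type*} [Field K] {A : Type*} [NonUnitalCommRing A] [Module K A]
    [SMulCommClass K A A] [IsScalarTower K A A]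
    (D : A →ₗ[K] A) (hD : ∀ x y : A, D (x * y) = D x * y + x * D y)
    (f : A →ₗ[K] K) (hf : ∀ x y : A, f (D x * y) = f (x * D y)) :
    Is3LieBracket K (fun x y z =>
      f x • (D y * z - D z * y) + f y • (D z * x - D x * z) + f z • (D x * y - D y * x)) :=
  is3LieBracket_traceBracket (isAlt_wittBracket D) (wittBracket_leibniz D hD)
    (apply_wittBracket_eq_zero D hf)
end

section
/- Let (g, ·) be a commutative associative algebra over a field K, D : g → g a derivation, and f : g → K a linear functional with f(D(x)·y) = f(x·D(y)) for all x, y ∈ g, so that ⟦x,y,z⟧ = f(x)(D(y)·z − D(z)·y) + f(y)(D(z)·x − D(x)·z) + f(z)(D(x)·y − D(y)·x) defines a 3-Lie algebra structure on g. If N : g → g is a Nijenhuis operator on the associative algebra (g, ·) satisfying D∘N = N∘D, then N is a Nijenhuis operator on the 3-Lie algebra (g, ⟦·,·,·⟧), i.e. ⟦Nx, Ny, Nz⟧ = N(⟦x,y,z⟧_N²) for all x, y, z ∈ g. -/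
def IsNijenhuis2 {R : Type*} [Semiring R] {A : Type*} [AddCommGroup A] [Module R A]
    (br : A → A → A) (N : A →ₗ[R] A) : Prop :=
  ∀ x y : A, br (N x) (N y) = N (br (N x) y + br x (N y) - N (br x y))

theorem IsNijenhuis2.derivationCommutator {R : Type*} [Semiring R] {A : Type*} [NonUnitalRing A]
    [Module R A] {N : A →ₗ[R] A} (hN : IsNijenhuis2 (· * ·) N) (D : A → A)
    (hDN : ∀ x : A, D (N x) = N (D x)) :
    IsNijenhuis2 (fun u v => D u * v - D v * u) N := by
  simp only [IsNijenhuis2] at hN ⊢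
  intro u v
  rw [hDN u, hDN v, hN (D u) v, hN (D v) u]
  simp only [map_add, map_sub]
  abel

theorem IsNijenhuis2.isNijenhuis3_cyclic {K : Type*} [Field K] {A : Type*} [AddCommGroup A]
    [Module K A] {br : A → A → A} {N : A →ₗ[K] A} (hN : IsNijenhuis2 br N) (f : A → K) :
    IsNijenhuis3 K (fun x y z => f x • br y z + f y • br z x + f z • br x y) N := by
  intro x y z
  dsimp only
  rw [hN y z, hN z x, hN x y]
  simp only [map_add, map_sub, map_smul]
  module

theorem nijenhuis_on_derivation_functional_threeLie_general
    {K : Type*} [Field K] {A : Type*} [NonUnitalCommRing A] [Module K A]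
    (D : A →ₗ[K] A)
    (f : A →ₗ[K] K)
    (N : A →ₗ[K] A)
    (hN : ∀ x y : A, N x * N y = N (N x * y + x * N y - N (x * y)))
    (hDN : ∀ x : A, D (N x) = N (D x)) :
    IsNijenhuis3 K (fun x y z =>
      f x • (D y * z - D z * y) + f y • (D z * x - D x * z) + f z • (D x * y - D y * x)) N :=
  (IsNijenhuis2.derivationCommutator hN D hDN).isNijenhuis3_cyclic f

/-- With `(A, *)` commutative associative over `K`, `D` a derivation
and `f` a linear functional with `f(D(x)·y) = f(x·D(y))`, the bracket
`⟦x,y,z⟧ = f(x)(D(y)z − D(z)y) + f(y)(D(z)x − D(x)z) + f(z)(D(x)y − D(y)x)` is a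
3-Lie bracket; if `N` is a Nijenhuis operator on the associative algebra `(A, *)`
commuting with `D`, then `N` is a Nijenhuis operator on this 3-Lie algebra. -/
theorem nijenhuis_on_derivation_functional_threeLie
    {K : Type*} [Field K] {A : Type*} [NonUnitalCommRing A] [Module K A]
    [SMulCommClass K A A] [IsScalarTower K A A]
    (D : A →ₗ[K] A) (hD : ∀ x y : A, D (x * y) = D x * y + x * D y)
    (f : A →ₗ[K] K) (hf : ∀ x y : A, f (D x * y) = f (x * D y))
    (N : A →ₗ[K] A)
    (hN : ∀ x y : A, N x * N y = N (N x * y + x * N y - N (x * y)))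
    (hDN : ∀ x : A, D (N x) = N (D x)) :
    IsNijenhuis3 K (fun x y z =>
      f x • (D y * z - D z * y) + f y • (D z * x - D x * z) + f z • (D x * y - D y * x)) N :=
  nijenhuis_on_derivation_functional_threeLie_general D f N hN hDN
end

section
/- Let g = ℂ⁴ with basis e₁, e₂, e₃, e₄ and the trilinear skew-symmetric bracket determined by [e₂,e₃,e₄] = e₁, [e₁,e₂,e₄] = e₃, [e₁,e₃,e₄] = e₂, [e₁,e₂,e₃] = e₄ (this is the 4-dimensional simple complex 3-Lie algebra). Then every derivation N of g (i.e. every linear map N with N[x,y,z] = [Nx,y,z] + [x,Ny,z] + [x,y,Nz]) is a Rota-Baxter operator of weight 0 on g, and consequently every derivation of g is a Nijenhuis operator on g. -/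
/-!
For `⟨u, w⟩ = u₀w₀ - u₁w₁ + u₂w₂ - u₃w₃` the bracket satisfies `⟨[x,y,z], w⟩ = -det(x,y,z,w)`,
and every derivation is skew for this form: its matrix is one of the `skewFourDim`. For skew
`N`, comparing `t³`-coefficients in
`det((1+tN)x, (1+tN)y, (1+tN)z, (1+tN)w) = det(1+tN) det(x,y,z,w)` gives
`⟨[Nx,Ny,Nz] - N([Nx,Ny,z] + [Nx,y,Nz] + [x,Ny,Nz]), w⟩ = -e₃(N) det(x,y,z,w)`, and `e₃(N) = 0`
because `det(1+tN) = det(1-tN)`. Concretely this is a polynomial identity in the six entries of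
`N`, checked by expansion. For a derivation `[x,y,z]¹_N = 0`, so the Nijenhuis identity reduces
to the Rota-Baxter one.
-/

/-- The 3×3 minor of the coordinates `i, j, k` of the three vectors `x, y, z ∈ ℂ⁴`. -/
def minor3 (i j k : Fin 4) (x y z : Fin 4 → ℂ) : ℂ :=
  x i * (y j * z k) - x i * (y k * z j) - x j * (y i * z k) + x j * (y k * z i)
    + x k * (y i * z j) - x k * (y j * z i)

/-- The 4-dimensional simple complex 3-Lie algebra: the trilinear skew-symmetric
bracket on `ℂ⁴` determined by `[e₂,e₃,e₄] = e₁`, `[e₁,e₂,e₄] = e₃`,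
`[e₁,e₃,e₄] = e₂`, `[e₁,e₂,e₃] = e₄` (indices written 1-based; here 0-based). -/
noncomputable def fourDimBracket (x y z : Fin 4 → ℂ) : Fin 4 → ℂ :=
  minor3 1 2 3 x y z • (Pi.single 0 1 : Fin 4 → ℂ)
    + minor3 0 1 3 x y z • (Pi.single 2 1 : Fin 4 → ℂ)
    + minor3 0 2 3 x y z • (Pi.single 1 1 : Fin 4 → ℂ)
    + minor3 0 1 2 x y z • (Pi.single 3 1 : Fin 4 → ℂ)

/-- `P` is a Rota-Baxter operator of weight 0 on the 3-Lie algebra `(A, br)`. -/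
def IsRotaBaxter3 (K : Type*) [Field K] {A : Type*} [AddCommGroup A] [Module K A]
    (br : A → A → A → A) (P : A →ₗ[K] A) : Prop :=
  ∀ x y z : A,
    br (P x) (P y) (P z)
      = P (br (P x) (P y) z + br (P x) y (P z) + br x (P y) (P z))

def IsDerivation3 (K : Type*) [Semiring K] {A : Type*} [AddCommMonoid A] [Module K A]
    (br : A → A → A → A) (D : A →ₗ[K] A) : Prop :=
  ∀ x y z : A, D (br x y z) = br (D x) y z + br x (D y) z + br x y (D z)

theorem IsDerivation3.isNijenhuis3 {K : Type*} [Field K] {A : Type*} [AddCommGroup A]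
    [Module K A] {br : A → A → A → A} {N : A →ₗ[K] A} (hder : IsDerivation3 K br N)
    (hRB : IsRotaBaxter3 K br N) : IsNijenhuis3 K br N := by
  intro x y z
  rw [← hder x y z, sub_self, map_zero, sub_zero]
  exact hRB x y z

theorem fourDimBracket_eq (x y z : Fin 4 → ℂ) :
    fourDimBracket x y z =
      ![minor3 1 2 3 x y z, minor3 0 2 3 x y z, minor3 0 1 3 x y z, minor3 0 1 2 x y z] := by
  funext i
  fin_cases i <;> simp [fourDimBracket]

noncomputable def skewFourDim (a b c d e f : ℂ) : (Fin 4 → ℂ) →ₗ[ℂ] (Fin 4 → ℂ) :=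
  Matrix.toLin' !![0, a, b, c; a, 0, d, e; -b, d, 0, f; c, -e, f, 0]

theorem isRotaBaxter3_skewFourDim (a b c d e f : ℂ) :
    IsRotaBaxter3 ℂ fourDimBracket (skewFourDim a b c d e f) := by
  intro x y z
  funext i
  fin_cases i <;>
    simp only [skewFourDim, Matrix.toLin'_apply, Matrix.cons_mulVec, Matrix.empty_mulVec,
      dotProduct, Fin.sum_univ_four, Matrix.cons_val_zero, Matrix.cons_val_one, Matrix.cons_val,
      Fin.zero_eta, Fin.mk_one, Fin.reduceFinMk, fourDimBracket_eq, minor3, Matrix.add_cons,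
      Matrix.head_cons, Matrix.tail_cons, Matrix.empty_add_empty, Matrix.mulVec, Matrix.of_apply,
      Matrix.cons_val', Matrix.cons_val_fin_one] <;>
    ring

theorem exists_eq_skewFourDim_of_isDerivation3 {N : (Fin 4 → ℂ) →ₗ[ℂ] (Fin 4 → ℂ)}
    (hder : IsDerivation3 ℂ fourDimBracket N) :
    ∃ a b c d e f : ℂ, N = skewFourDim a b c d e f := by
  set m := LinearMap.toMatrix' N
  have hN (x : Fin 4 → ℂ) : N x = m.mulVec x := by simp [m]
  have basis (i j k : Fin 4) :=
    hder (Pi.single i 1) (Pi.single j 1) (Pi.single k 1)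
  simp only [hN] at basis
  have h123 : m 0 0 = m 1 1 + m 2 2 + m 3 3 ∧ m 1 0 = m 0 1 ∧ m 2 0 = -m 0 2 ∧ m 3 0 = m 0 3 := by
    simpa [fourDimBracket_eq, minor3, Matrix.mulVec, dotProduct, Fin.sum_univ_four,
      Pi.single_apply, funext_iff, Fin.forall_fin_succ] using basis 1 2 3
  have h023 : m 0 1 = m 1 0 ∧ m 1 1 = m 0 0 + m 2 2 + m 3 3 ∧ m 2 1 = m 1 2 ∧ m 3 1 = -m 1 3 := by
    simpa [fourDimBracket_eq, minor3, Matrix.mulVec, dotProduct, Fin.sum_univ_four,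
      Pi.single_apply, funext_iff, Fin.forall_fin_succ] using basis 0 2 3
  have h013 : m 0 2 = -m 2 0 ∧ m 1 2 = m 2 1 ∧ m 2 2 = m 0 0 + m 1 1 + m 3 3 ∧ m 3 2 = m 2 3 := by
    simpa [fourDimBracket_eq, minor3, Matrix.mulVec, dotProduct, Fin.sum_univ_four,
      Pi.single_apply, funext_iff, Fin.forall_fin_succ] using basis 0 1 3
  have h012 : m 0 3 = m 3 0 ∧ m 1 3 = -m 3 1 ∧ m 2 3 = m 3 2 ∧
      m 3 3 = m 0 0 + m 1 1 + m 2 2 := by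
    simpa [fourDimBracket_eq, minor3, Matrix.mulVec, dotProduct, Fin.sum_univ_four,
      Pi.single_apply, funext_iff, Fin.forall_fin_succ] using basis 0 1 2
  obtain ⟨h00, h10, h20, h30⟩ := h123
  obtain ⟨-, h11, h21, h31⟩ := h023
  obtain ⟨-, -, h22, h32⟩ := h013
  obtain ⟨-, -, -, h33⟩ := h012
  have htrace : m 0 0 + m 1 1 + m 2 2 + m 3 3 = 0 := by
    linear_combination -(h00 + h11 + h22 + h33) / 2
  have d0 : m 0 0 = 0 := by linear_combination (h00 + htrace) / 2
  have d1 : m 1 1 = 0 := by linear_combination (h11 + htrace) / 2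
  have d2 : m 2 2 = 0 := by linear_combination (h22 + htrace) / 2
  have d3 : m 3 3 = 0 := by linear_combination (h33 + htrace) / 2
  refine ⟨m 0 1, m 0 2, m 0 3, m 1 2, m 1 3, m 2 3, ?_⟩
  rw [← Matrix.toLin'_toMatrix' N, skewFourDim]
  congr 1
  ext i j
  fin_cases i <;> fin_cases j <;> simp [m, d0, d1, d2, d3, h10, h20, h30, h21, h31, h32]

/-- Every derivation of the 4-dimensional simple complex 3-Lie
algebra is a Rota-Baxter operator of weight 0, and consequently every derivation
is a Nijenhuis operator. -/
theorem derivations_of_fourDim_are_rotaBaxter_and_nijenhuis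
    (N : (Fin 4 → ℂ) →ₗ[ℂ] (Fin 4 → ℂ))
    (hder : ∀ x y z : Fin 4 → ℂ,
      N (fourDimBracket x y z)
        = fourDimBracket (N x) y z + fourDimBracket x (N y) z + fourDimBracket x y (N z)) :
    IsRotaBaxter3 ℂ fourDimBracket N ∧ IsNijenhuis3 ℂ fourDimBracket N := by
  obtain ⟨a, b, c, d, e, f, rfl⟩ := exists_eq_skewFourDim_of_isDerivation3 hder
  have hRB := isRotaBaxter3_skewFourDim a b c d e f
  exact ⟨hRB, IsDerivation3.isNijenhuis3 hder hRB⟩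
end
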